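/- Let (⋯ → G₂ →p₁→ G₁ →p₀→ G₀) be an inverse sequence of countable groups. If the derived limit lim¹ Gᵢ is countable (for example, trivial), then the sequence satisfies the Mittag-Leffler condition. -/

import Mathlib

/-- An inverse sequence of groups `⋯ → G₂ → G₁ → G₀`, presented by its compatible
composite bonding homomorphisms `bond h : G j →* G i` for `i ≤ j`; the one-step
bonding maps `pᵢ` are `bond (Nat.le_succ i) : G (i+1) →* G i`. -/
structure GroupInvSeq (G : ℕ → Type) [∀ i, Group (G i)] : Type where
  bond : ∀ ⦃i j : ℕ⦄, i ≤ j → (G j →* G i)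
  bond_refl : ∀ i, bond (le_refl i) = MonoidHom.id (G i)
  bond_comp : ∀ ⦃i j k : ℕ⦄ (hij : i ≤ j) (hjk : j ≤ k),
    (bond hij).comp (bond hjk) = bond (hij.trans hjk)

namespace GroupInvSeq

variable {G : ℕ → Type} [∀ i, Group (G i)]

/-- The orbit relation on `∏ᵢ Gᵢ` of the right action
`(g₀,g₁,…)·(x₀,x₁,…) = (x₀⁻¹g₀p₀(x₁), x₁⁻¹g₁p₁(x₂), …)`; its orbit set is `lim¹`. -/
def lim1Rel (S : GroupInvSeq G) (g g' : ∀ i, G i) : Prop :=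
  ∃ x : ∀ i, G i, ∀ i, g' i = (x i)⁻¹ * g i * S.bond (Nat.le_succ i) (x (i + 1))

/-- The derived limit `lim¹` of an inverse sequence of groups: the orbit set of the
action above, pointed at the class of the identity. -/
def lim1 (S : GroupInvSeq G) : Type :=
  Quot S.lim1Rel

/-- The Mittag-Leffler condition: for each `i` there is `j > i` such that for all
`k > j` the image of `G k → G i` equals the image of `G j → G i`. -/
def MittagLeffler (S : GroupInvSeq G) : Prop :=
  ∀ i, ∃ j, ∃ hij : i < j, ∀ k, ∀ hjk : j < k,
    Set.range (S.bond (hij.le.trans hjk.le)) = Set.range (S.bond hij.le)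

end GroupInvSeq

/-!
If the images `Iₙ` of `G (i + n) → G i` never stabilise, choose at every level where
`Iₙ₊₁ ⊊ Iₙ` an element whose image in `G i` lies outside `Iₙ₊₁`; every subset `s` of these
(infinitely many) levels selects an element `g s` of `∏ Gⱼ`. If `x` witnesses `g ~ g'` in `lim¹`,
the ordered partial products `P_N` of the images in `G i` telescope, so that
`(P_N g)⁻¹ * xᵢ * P_N g' ∈ I_N` for all `N`. A class of `lim¹` together with one element of `G i`
therefore determines `s` level by level, and uncountably many `s` cannot fit into the countable
set `lim¹ × G i`.
-/

theorem List.prod_range_map_inv_mul_mul_succ {H : Type*} [Group H] (a b : ℕ → H) (N : ℕ) :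
    ((List.range N).map fun n => (a n)⁻¹ * b n * a (n + 1)).prod =
      (a 0)⁻¹ * ((List.range N).map b).prod * a N := by
  induction N with
  | zero => simp
  | succ N ih => rw [List.prod_range_succ, List.prod_range_succ, ih]; group

theorem eq_of_forall_prod_mulIndicator_inv_mul_mem {H : Type*} [Group H] {I : ℕ → Subgroup H}
    {y : ℕ → H} {D s t : Set ℕ} (hy : ∀ n ∈ D, y n ∉ I (n + 1)) (hs : s ⊆ D) (ht : t ⊆ D)
    (h : ∀ N, ((List.range N).map (s.mulIndicator y)).prod⁻¹ *
      ((List.range N).map (t.mulIndicator y)).prod ∈ I N) : s = t := by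
  ext n
  induction n using Nat.strong_induction_on with
  | _ n ih =>
  have hprefix : ((List.range n).map (s.mulIndicator y)).prod =
      ((List.range n).map (t.mulIndicator y)).prod := by
    congr 1
    refine List.map_congr_left fun m hm => ?_
    classical exact if_congr (ih m (List.mem_range.mp hm)) rfl rfl
  have hstep := h (n + 1)
  rw [List.prod_range_succ, List.prod_range_succ, hprefix, mul_inv_rev, mul_assoc,
    inv_mul_cancel_left] at hstep
  constructor
  · intro hns
    by_contra hnt
    rw [Set.mulIndicator_of_mem hns, Set.mulIndicator_of_notMem hnt, mul_one, inv_mem_iff]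
      at hstep
    exact hy n (hs hns) hstep
  · intro hnt
    by_contra hns
    rw [Set.mulIndicator_of_mem hnt, Set.mulIndicator_of_notMem hns, inv_one, one_mul] at hstep
    exact hy n (ht hnt) hstep

theorem uncountable_set_of_infinite (α : Type*) [Infinite α] : Uncountable (Set α) := by
  rw [← Cardinal.aleph0_lt_mk_iff, Cardinal.mk_set]
  exact (Cardinal.cantor _).trans_le
    (Cardinal.power_le_power_left two_ne_zero (Cardinal.infinite_iff.mp ‹_›))

namespace GroupInvSeq

variable {G : ℕ → Type} [∀ i, Group (G i)]

open Classical in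
noncomputable def levelIndicator (i : ℕ) (z : ∀ j, G j) (s : Set ℕ) : ∀ j, G j :=
  fun j => if i ≤ j ∧ j - i ∈ s then z j else 1

variable (S : GroupInvSeq G)

theorem bond_bond {i j k : ℕ} (hij : i ≤ j) (hjk : j ≤ k) (u : G k) :
    S.bond hij (S.bond hjk u) = S.bond (hij.trans hjk) u :=
  DFunLike.congr_fun (S.bond_comp hij hjk) u

theorem lim1Rel_equivalence : Equivalence S.lim1Rel where
  refl g := ⟨fun _ => 1, fun n => by simp⟩
  symm := by
    rintro g g' ⟨x, hx⟩
    refine ⟨fun n => (x n)⁻¹, fun n => ?_⟩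
    rw [hx n, map_inv]
    group
  trans := by
    rintro g g' g'' ⟨x, hx⟩ ⟨x', hx'⟩
    refine ⟨fun n => x n * x' n, fun n => ?_⟩
    rw [hx' n, hx n, map_mul]
    group

theorem lim1Rel_of_mk_eq {g g' : ∀ j, G j} (h : (Quot.mk _ g : S.lim1) = Quot.mk _ g') :
    S.lim1Rel g g' :=
  S.lim1Rel_equivalence.eqvGen_iff.mp (Quot.eqvGen_exact h)

def MittagLefflerAt (i : ℕ) : Prop :=
  ∃ j, ∃ hij : i < j, ∀ k, ∀ hjk : j < k,
    Set.range (S.bond (hij.le.trans hjk.le)) = Set.range (S.bond hij.le)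

variable (i : ℕ)

def bondRange (n : ℕ) : Subgroup (G i) := (S.bond (Nat.le_add_right i n)).range

def proj (g : ∀ j, G j) (n : ℕ) : G i := S.bond (Nat.le_add_right i n) (g (i + n))

theorem proj_mem_bondRange (g : ∀ j, G j) (n : ℕ) : S.proj i g n ∈ S.bondRange i n :=
  ⟨g (i + n), rfl⟩

theorem bondRange_succ_le (n : ℕ) : S.bondRange i (n + 1) ≤ S.bondRange i n := by
  rintro _ ⟨u, rfl⟩
  exact ⟨S.bond (Nat.le_succ (i + n)) u, S.bond_bond _ _ u⟩

theorem mittagLefflerAt_of_finite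
    (hD : {n | S.bondRange i (n + 1) ≠ S.bondRange i n}.Finite) : S.MittagLefflerAt i := by
  obtain ⟨M, hM⟩ := hD.bddAbove
  have hstable : ∀ n, M + 1 ≤ n → S.bondRange i n = S.bondRange i (M + 1) := by
    intro n hn
    induction n, hn using Nat.le_induction with
    | base => rfl
    | succ n hn ih =>
      rw [← ih]
      by_contra hne
      have := hM hne
      omega
  refine ⟨i + (M + 1), by omega, fun k hk => ?_⟩
  obtain ⟨n, rfl⟩ := Nat.exists_eq_add_of_le (show i ≤ k by omega)
  exact congrArg SetLike.coe (hstable n (by omega))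

theorem exists_proj_notMem_bondRange_succ : ∃ z : ∀ j, G j, ∀ n,
    S.bondRange i (n + 1) ≠ S.bondRange i n → S.proj i z n ∉ S.bondRange i (n + 1) := by
  -- Indexed by the level `j` rather than the offset `n`, so that `choose` yields `∀ j, G j`
  -- without casting along `i + n = j`.
  have hlevel : ∀ j, ∃ w : G j, ∀ hij : i ≤ j,
      S.bondRange i (j - i + 1) ≠ S.bondRange i (j - i) →
        S.bond hij w ∉ S.bondRange i (j - i + 1) := by
    intro j
    by_cases hij : i ≤ j
    · obtain ⟨n, rfl⟩ := Nat.exists_eq_add_of_le hij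
      simp only [Nat.add_sub_cancel_left]
      by_cases hn : S.bondRange i (n + 1) = S.bondRange i n
      · exact ⟨1, fun _ h => absurd hn h⟩
      · obtain ⟨_, ⟨w, rfl⟩, hw⟩ :=
          SetLike.exists_of_lt (lt_of_le_of_ne (S.bondRange_succ_le i n) hn)
        exact ⟨w, fun _ _ => hw⟩
    · exact ⟨1, fun h => absurd h hij⟩
  choose z hz using hlevel
  refine ⟨z, fun n hn => ?_⟩
  have := hz (i + n) (Nat.le_add_right i n)
  simp only [Nat.add_sub_cancel_left] at this
  exact this hn

theorem proj_levelIndicator (z : ∀ j, G j) (s : Set ℕ) :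
    S.proj i (levelIndicator i z s) = s.mulIndicator (S.proj i z) := by
  funext n
  simp only [proj, levelIndicator, Set.mulIndicator, apply_ite (S.bond _), map_one]
  classical exact if_congr (by simp) rfl rfl

theorem exists_forall_prod_proj_mem_of_lim1Rel {g g' : ∀ j, G j} (h : S.lim1Rel g g') :
    ∃ c : G i, ∀ N, ((List.range N).map (S.proj i g)).prod⁻¹ * c *
      ((List.range N).map (S.proj i g')).prod ∈ S.bondRange i N := by
  obtain ⟨x, hx⟩ := h
  have hproj : S.proj i g' = fun n => (S.proj i x n)⁻¹ * S.proj i g n * S.proj i x (n + 1) := by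
    funext n
    simp only [proj, hx, map_mul, map_inv, S.bond_bond]
    rfl
  refine ⟨S.proj i x 0, fun N => ?_⟩
  rw [hproj, List.prod_range_map_inv_mul_mul_succ]
  simpa [mul_assoc] using S.proj_mem_bondRange i x N

theorem mittagLefflerAt_of_countable_lim1 [Countable (G i)] [Countable S.lim1] :
    S.MittagLefflerAt i := by
  by_contra hML
  set D := {n | S.bondRange i (n + 1) ≠ S.bondRange i n}
  have : Infinite D := Set.infinite_coe_iff.mpr fun hD => hML (S.mittagLefflerAt_of_finite i hD)
  have := uncountable_set_of_infinite D
  obtain ⟨z, hz⟩ := S.exists_proj_notMem_bondRange_succ i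
  let g : Set D → ∀ j, G j := fun s => levelIndicator i z (Subtype.val '' s)
  -- Measuring each `g s` against the chosen representative of its class lets the pair
  -- (class, linking element) determine `s`.
  have hlink : ∀ s, ∃ c : G i, ∀ N,
      ((List.range N).map (S.proj i (Quot.mk S.lim1Rel (g s)).out)).prod⁻¹ * c *
        ((List.range N).map (S.proj i (g s))).prod ∈ S.bondRange i N :=
    fun s => S.exists_forall_prod_proj_mem_of_lim1Rel i (S.lim1Rel_of_mk_eq (Quot.out_eq _))
  choose c hc using hlink
  have hinj : Function.Injective fun s => ((Quot.mk _ (g s), c s) : S.lim1 × G i) := by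
    intro s t hst
    obtain ⟨hq, hcst⟩ := Prod.mk.inj hst
    refine Subtype.val_injective.image_injective <| eq_of_forall_prod_mulIndicator_inv_mul_mem
      hz (Subtype.coe_image_subset _ _) (Subtype.coe_image_subset _ _) fun N => ?_
    have hs := hc s N
    rw [hq, hcst] at hs
    simpa [g, proj_levelIndicator, mul_assoc] using mul_mem (inv_mem hs) (hc t N)
  exact not_countable hinj.countable

end GroupInvSeq

theorem mittagLeffler_of_countable_lim1 {G : ℕ → Type} [∀ i, Group (G i)]
    [∀ i, Countable (G i)] (S : GroupInvSeq G) (h : Countable S.lim1) :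
    S.MittagLeffler :=
  fun i => S.mittagLefflerAt_of_countable_lim1 i
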